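/- Let w ∈ Θ with associated constant Ã > 0 (so that lim_{|x|→∞} w(t,x)·exp{−Ã[log((|x|²+1)^{1/2})]²} = 0 uniformly in t ∈ [0,T]), and let K ≥ 0, α > 0, C₁ > 0. Set ψ(x) = [log((|x|²+1)^{1/2}) + 1]², χ(t,x) = exp[(C₁(T−t)+Ã)ψ(x)], and t₁ = max(T − Ã/C₁, 0). Then w − αχ is bounded from above on [t₁,T]×ℝⁿ, and the function (t,x) ↦ (w(t,x) − αχ(t,x))·e^{−K(T−t)} attains its maximum over [t₁,T]×ℝⁿ at some point (t₀,x₀) ∈ [t₁,T]×ℝⁿ. -/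

import Mathlib

noncomputable section

/-- The Euclidean state space `ℝⁿ`. -/
abbrev Eucl (n : ℕ) := EuclideanSpace ℝ (Fin n)

/-- `ψ(x) = [log((|x|²+1)^{1/2}) + 1]²`. -/
def psiFun {n : ℕ} (x : Eucl n) : ℝ :=
  (Real.log ((‖x‖ ^ 2 + 1) ^ ((1 : ℝ) / 2)) + 1) ^ 2

/-- `χ(t,x) = exp[(C₁(T−t)+Ã)ψ(x)]`. -/
def chiFun {n : ℕ} (T C₁ A : ℝ) (t : ℝ) (x : Eucl n) : ℝ :=
  Real.exp ((C₁ * (T - t) + A) * psiFun x)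

set_option maxHeartbeats 1000000 in
/-- **Attainment of the penalized maximum.** For `w ∈ Θ` with associated constant `Ã > 0`,
`K ≥ 0`, `α > 0` and `C₁ > 0`, the function `w − αχ` is bounded above on `[t₁,T]×ℝⁿ`
(`t₁ = max(T − Ã/C₁, 0)`) and `(w − αχ)e^{−K(T−t)}` attains its maximum over
`[t₁,T]×ℝⁿ` at some point `(t₀,x₀)`. -/
theorem penalized_max_attained
    {n : ℕ} (hn : 1 ≤ n) {T : ℝ} (hT : 0 < T)
    (w : ℝ → Eucl n → ℝ) (K α A C₁ : ℝ)
    (hK : 0 ≤ K) (hα : 0 < α) (hA : 0 < A) (hC₁ : 0 < C₁)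
    -- `w` is continuous on `[0,T]×ℝⁿ`
    (hw_cont : ContinuousOn (fun p : ℝ × Eucl n => w p.1 p.2)
      (Set.Icc (0 : ℝ) T ×ˢ (Set.univ : Set (Eucl n))))
    -- `w ∈ Θ` with constant `Ã = A`
    (hw_lim : ∀ ε > (0 : ℝ), ∃ R : ℝ, ∀ t ∈ Set.Icc (0 : ℝ) T, ∀ x : Eucl n, R ≤ ‖x‖ →
      |w t x| * Real.exp (-A * (Real.log ((‖x‖ ^ 2 + 1) ^ ((1 : ℝ) / 2))) ^ 2) ≤ ε) :
    BddAbove ((fun p : ℝ × Eucl n => w p.1 p.2 - α * chiFun T C₁ A p.1 p.2) ''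
        (Set.Icc (max (T - A / C₁) 0) T ×ˢ (Set.univ : Set (Eucl n)))) ∧
    ∃ t₀ ∈ Set.Icc (max (T - A / C₁) 0) T, ∃ x₀ : Eucl n,
      ∀ t ∈ Set.Icc (max (T - A / C₁) 0) T, ∀ x : Eucl n,
        (w t x - α * chiFun T C₁ A t x) * Real.exp (-K * (T - t)) ≤
          (w t₀ x₀ - α * chiFun T C₁ A t₀ x₀) * Real.exp (-K * (T - t₀)) := by
  set t₁ := max (T - A / C₁) 0 with ht₁def
  have ht₁0 : (0:ℝ) ≤ t₁ := le_max_right _ _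
  have ht₁T : t₁ ≤ T := by
    apply max_le _ hT.le
    have : 0 < A / C₁ := div_pos hA hC₁
    linarith
  -- the weight exponent
  set L : Eucl n → ℝ := fun x => Real.log ((‖x‖ ^ 2 + 1) ^ ((1 : ℝ) / 2)) with hLdef
  have hbase : ∀ x : Eucl n, (1:ℝ) ≤ ‖x‖ ^ 2 + 1 := by
    intro x; nlinarith [sq_nonneg ‖x‖]
  have hbasepos : ∀ x : Eucl n, (0:ℝ) < ‖x‖ ^ 2 + 1 := fun x => lt_of_lt_of_le one_pos (hbase x)
  have hLeq : ∀ x : Eucl n, L x = (1/2) * Real.log (‖x‖ ^ 2 + 1) := by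
    intro x; simp only [hLdef]; exact Real.log_rpow (hbasepos x) _
  have hL0 : ∀ x : Eucl n, 0 ≤ L x := by
    intro x; rw [hLeq x]
    have := Real.log_nonneg (hbase x); linarith
  have hLlog : ∀ x : Eucl n, 1 ≤ ‖x‖ → Real.log ‖x‖ ≤ L x := by
    intro x hx
    rw [hLeq x]
    have h1 : Real.log (‖x‖ ^ 2) ≤ Real.log (‖x‖ ^ 2 + 1) := by
      apply Real.log_le_log (by positivity); linarith
    rw [Real.log_pow] at h1
    push_cast at h1
    linarith
  have hpsiL : ∀ x : Eucl n, psiFun x = (L x + 1)^2 := fun x => rfl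
  -- the penalized function
  set g : ℝ → Eucl n → ℝ := fun t x => (w t x - α * chiFun T C₁ A t x) * Real.exp (-K * (T - t))
    with hgdef
  -- continuity
  have hpsi_cont : Continuous (psiFun (n := n)) := by
    unfold psiFun
    have h1 : Continuous fun x : Eucl n => ‖x‖ ^ 2 + 1 :=
      ((continuous_norm.pow 2).add continuous_const)
    have h2 : Continuous fun x : Eucl n => (‖x‖ ^ 2 + 1) ^ ((1:ℝ)/2) :=
      h1.rpow_const (fun x => Or.inr (by norm_num))
    have h3 : Continuous fun x : Eucl n => Real.log ((‖x‖ ^ 2 + 1) ^ ((1:ℝ)/2)) :=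
      h2.log (fun x => ne_of_gt (Real.rpow_pos_of_pos (hbasepos x) _))
    exact (h3.add continuous_const).pow 2
  have hchi_cont : Continuous fun p : ℝ × Eucl n => chiFun T C₁ A p.1 p.2 := by
    unfold chiFun
    exact Real.continuous_exp.comp
      (((continuous_const.mul (continuous_const.sub continuous_fst)).add continuous_const).mul
        (hpsi_cont.comp continuous_snd))
  have hg_cont : ContinuousOn (fun p : ℝ × Eucl n => g p.1 p.2)
      (Set.Icc (0:ℝ) T ×ˢ (Set.univ : Set (Eucl n))) := by
    apply ContinuousOn.mul
    · exact hw_cont.sub (continuous_const.mul hchi_cont).continuousOn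
    · exact (Real.continuous_exp.comp
        (continuous_const.mul (continuous_const.sub continuous_fst))).continuousOn
  -- key pointwise bound far away
  obtain ⟨R₀, hR₀⟩ := hw_lim (α/2) (half_pos hα)
  have key : ∀ t ∈ Set.Icc t₁ T, ∀ x : Eucl n, R₀ ≤ ‖x‖ →
      w t x - α * chiFun T C₁ A t x ≤ -(α/2) * Real.exp (2*A*L x) := by
    intro t ht x hx
    have ht0T : t ∈ Set.Icc (0:ℝ) T := ⟨le_trans ht₁0 ht.1, ht.2⟩
    have hTt : 0 ≤ T - t := by linarith [ht.2]
    have hxb := hR₀ t ht0T x hx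
    have hE1pos : (0:ℝ) < Real.exp (A * L x ^ 2) := Real.exp_pos _
    have hw_le : w t x ≤ (α/2) * Real.exp (A * L x ^ 2) := by
      have h1 : |w t x| * Real.exp (-A * L x ^ 2) = |w t x| / Real.exp (A * L x ^ 2) := by
        rw [div_eq_mul_inv, ← Real.exp_neg]; ring_nf
      rw [h1] at hxb
      have := (div_le_iff₀ hE1pos).mp hxb
      exact le_trans (le_abs_self _) this
    have hchi : Real.exp (A * L x ^ 2) * Real.exp (2*A*L x) ≤ chiFun T C₁ A t x := by
      rw [chiFun, ← Real.exp_add]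
      apply Real.exp_le_exp.mpr
      rw [hpsiL x]
      nlinarith [mul_nonneg (mul_nonneg hC₁.le hTt) (sq_nonneg (L x + 1)), hA.le, hL0 x,
        sq_nonneg (L x)]
    have hE1 : (1:ℝ) ≤ Real.exp (A * L x ^ 2) :=
      Real.one_le_exp (by positivity)
    have hE2 : (1:ℝ) ≤ Real.exp (2*A*L x) :=
      Real.one_le_exp (by nlinarith [hL0 x])
    have h12 : Real.exp (A * L x ^ 2) ≤ Real.exp (A * L x ^ 2) * Real.exp (2*A*L x) := by
      nlinarith [hE1, hE2]
    have h21 : Real.exp (2*A*L x) ≤ Real.exp (A * L x ^ 2) * Real.exp (2*A*L x) := by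
      nlinarith [hE1, hE2]
    nlinarith [mul_le_mul_of_nonneg_left hchi hα.le, hw_le, hE1, hE2, hα, h12, h21]
  -- constants for the far-field bound against the reference value M
  set M : ℝ := g T 0 with hMdef
  set Cc : ℝ := (-M) * 2 * Real.exp (K*T) / α with hCcdef
  set D : ℝ := Real.log (max Cc 1) / (2*A) with hDdef
  have hD0 : 0 ≤ D := by
    apply div_nonneg _ (by positivity)
    exact Real.log_nonneg (le_max_right _ _)
  set R₁ : ℝ := Real.exp D with hR₁def
  have hR₁1 : (1:ℝ) ≤ R₁ := Real.one_le_exp hD0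
  set R : ℝ := max R₀ R₁ with hRdef
  have hR1 : (1:ℝ) ≤ R := le_trans hR₁1 (le_max_right _ _)
  -- far field: g ≤ M
  have gout : ∀ t ∈ Set.Icc t₁ T, ∀ x : Eucl n, R ≤ ‖x‖ → g t x ≤ M := by
    intro t ht x hx
    have hx1 : (1:ℝ) ≤ ‖x‖ := le_trans hR1 hx
    have hkey := key t ht x (le_trans (le_max_left _ _) hx)
    have hTt : 0 ≤ T - t := by linarith [ht.2]
    have ht0 : 0 ≤ t := le_trans ht₁0 ht.1
    have hexp1 : Real.exp (-(K*T)) ≤ Real.exp (-K * (T - t)) := by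
      apply Real.exp_le_exp.mpr; nlinarith
    -- exp(2AL) ≥ max Cc 1
    have hLD : D ≤ L x := by
      have h1 : Real.log R₁ ≤ Real.log ‖x‖ :=
        Real.log_le_log (Real.exp_pos _) (le_trans (le_max_right _ _) hx)
      rw [hR₁def, Real.log_exp] at h1
      exact le_trans h1 (hLlog x hx1)
    have hE2C : max Cc 1 ≤ Real.exp (2*A*L x) := by
      have h2 : Real.log (max Cc 1) ≤ 2*A*L x := by
        have : 2*A*D = Real.log (max Cc 1) := by
          rw [hDdef]; field_simp
        nlinarith [hA]
      calc max Cc 1 = Real.exp (Real.log (max Cc 1)) :=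
            (Real.exp_log (lt_of_lt_of_le one_pos (le_max_right _ _))).symm
        _ ≤ Real.exp (2*A*L x) := Real.exp_le_exp.mpr h2
    have hE2Cc : Cc ≤ Real.exp (2*A*L x) := le_trans (le_max_left _ _) hE2C
    -- combine
    have step1 : g t x ≤ -(α/2) * Real.exp (2*A*L x) * Real.exp (-K * (T - t)) := by
      rw [hgdef]
      exact mul_le_mul_of_nonneg_right hkey (Real.exp_pos _).le
    have step2 : -(α/2) * Real.exp (2*A*L x) * Real.exp (-K * (T - t)) ≤
        -(α/2) * Real.exp (2*A*L x) * Real.exp (-(K*T)) := by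
      have hpos : 0 ≤ (α/2) * Real.exp (2*A*L x) := by positivity
      nlinarith [mul_le_mul_of_nonneg_left hexp1 hpos]
    have step3 : -(α/2) * Real.exp (2*A*L x) * Real.exp (-(K*T)) ≤
        -(α/2) * Cc * Real.exp (-(K*T)) := by
      have hpos : 0 < (α/2) * Real.exp (-(K*T)) := by positivity
      nlinarith [mul_le_mul_of_nonneg_left hE2Cc hpos.le]
    have step4 : -(α/2) * Cc * Real.exp (-(K*T)) = M := by
      rw [hCcdef, Real.exp_neg]
      field_simp
    linarith [step1, step2, step3]
  -- compact maximization
  have hsub : Set.Icc t₁ T ×ˢ Metric.closedBall (0 : Eucl n) R ⊆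
      Set.Icc (0:ℝ) T ×ˢ (Set.univ : Set (Eucl n)) := by
    rintro ⟨t, x⟩ ⟨ht, _⟩
    exact ⟨⟨le_trans ht₁0 ht.1, ht.2⟩, Set.mem_univ _⟩
  have hKc : IsCompact (Set.Icc t₁ T ×ˢ Metric.closedBall (0 : Eucl n) R) :=
    isCompact_Icc.prod (isCompact_closedBall _ _)
  have hT0mem : ((T, (0 : Eucl n)) : ℝ × Eucl n) ∈
      Set.Icc t₁ T ×ˢ Metric.closedBall (0 : Eucl n) R := by
    constructor
    · exact ⟨ht₁T, le_refl T⟩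
    · simp only [Metric.mem_closedBall, dist_zero_right, norm_zero]
      linarith
  obtain ⟨p₀, hp₀mem, hp₀max⟩ := hKc.exists_isMaxOn ⟨_, hT0mem⟩ (hg_cont.mono hsub)
  -- the global maximum over the strip
  have hmax : ∀ t ∈ Set.Icc t₁ T, ∀ x : Eucl n, g t x ≤ g p₀.1 p₀.2 := by
    intro t ht x
    by_cases hx : ‖x‖ ≤ R
    · have hmem : ((t, x) : ℝ × Eucl n) ∈ Set.Icc t₁ T ×ˢ Metric.closedBall (0 : Eucl n) R := by
        refine ⟨ht, ?_⟩
        simp only [Metric.mem_closedBall, dist_zero_right]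
        exact hx
      exact hp₀max hmem
    · push_neg at hx
      have h1 : g t x ≤ M := gout t ht x hx.le
      have h2 : M ≤ g p₀.1 p₀.2 := hp₀max hT0mem
      linarith
  have hp₀1 : p₀.1 ∈ Set.Icc t₁ T := hp₀mem.1
  constructor
  · -- bounded above
    refine ⟨max 0 (g p₀.1 p₀.2 * Real.exp (K*T)), ?_⟩
    rintro y ⟨⟨t, x⟩, ⟨ht, -⟩, rfl⟩
    simp only
    have hg := hmax t ht x
    have hTt : 0 ≤ T - t := by linarith [ht.2]
    have ht0 : 0 ≤ t := le_trans ht₁0 ht.1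
    have hfe : w t x - α * chiFun T C₁ A t x = g t x * Real.exp (K*(T-t)) := by
      rw [hgdef]
      simp only
      rw [mul_assoc, ← Real.exp_add]
      have h0 : -K*(T-t) + K*(T-t) = 0 := by ring
      rw [h0, Real.exp_zero, mul_one]
    rw [hfe]
    by_cases hgt : g t x ≤ 0
    · have : g t x * Real.exp (K*(T-t)) ≤ 0 :=
        mul_nonpos_of_nonpos_of_nonneg hgt (Real.exp_pos _).le
      exact le_trans this (le_max_left _ _)
    · push_neg at hgt
      have hg0 : 0 ≤ g p₀.1 p₀.2 := le_trans hgt.le hg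
      have hee : Real.exp (K*(T-t)) ≤ Real.exp (K*T) := by
        apply Real.exp_le_exp.mpr; nlinarith
      have : g t x * Real.exp (K*(T-t)) ≤ g p₀.1 p₀.2 * Real.exp (K*T) :=
        mul_le_mul hg hee (Real.exp_pos _).le hg0
      exact le_trans this (le_max_right _ _)
  · exact ⟨p₀.1, hp₀1, p₀.2, fun t ht x => hmax t ht x⟩
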